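/- arXiv:2007.04960 — 2 statements merged into one kernel-verified Lean document; each statement's English description precedes it below -/
import Mathlib

section
/- If Λ is an OWA-vector with all entries strictly positive, then every winning line-up under the OWA-rule f^Λ is score Pareto optimal (strong score Pareto optimality). -/
open Function

section Defs

variable {C P : Type*}

/-- Utilitarian (summed) score of a line-up. -/
def utilScore [Fintype P] (S : C → P → ℚ) (π : P → C) : ℚ := ∑ p, S (π p) p

/-- Winner under the utilitarian rule. -/
def IsUtilWinner [Fintype P] (S : C → P → ℚ) (π : P → C) : Prop :=
  Function.Injective π ∧
    ∀ π' : P → C, Function.Injective π' → utilScore S π' ≤ utilScore S π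

/-- Egalitarian (minimum) score of a line-up. -/
def egalScore [Fintype P] [Nonempty P] (S : C → P → ℚ) (π : P → C) : ℚ :=
  Finset.univ.inf' Finset.univ_nonempty (fun p => S (π p) p)

/-- Winner under the egalitarian rule. -/
def IsEgalWinner [Fintype P] [Nonempty P] (S : C → P → ℚ) (π : P → C) : Prop :=
  Function.Injective π ∧
    ∀ π' : P → C, Function.Injective π' → egalScore S π' ≤ egalScore S π

/-- Outcome of the sequential rule that fills positions in increasing order of the
priority `r`: each position receives a best candidate among those not assigned to
an earlier position. -/
def FixedOrderOutcome (r : P → ℕ) (S : C → P → ℚ) (π : P → C) : Prop :=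
  Function.Injective π ∧
    ∀ p : P, ∀ c : C, (∀ p' : P, r p' < r p → c ≠ π p') → S c p ≤ S (π p) p

/-- Outcome of some sequential rule: positions are filled one at a time in some order,
each receiving a best remaining candidate. -/
def SeqOutcome (S : C → P → ℚ) (π : P → C) : Prop :=
  ∃ r : P → ℕ, Function.Injective r ∧ FixedOrderOutcome r S π

/-- Outcome of the max-first rule along the order `r`: at each step the assigned
candidate-position pair has maximal score among all remaining pairs. -/
def MaxFirstOrder (r : P → ℕ) (S : C → P → ℚ) (π : P → C) : Prop :=
  Function.Injective π ∧
    ∀ p p'' : P, r p ≤ r p'' → ∀ c : C,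
      (∀ p' : P, r p' < r p → c ≠ π p') → S c p'' ≤ S (π p) p

/-- Outcome of the max-first sequential rule. -/
def MaxFirstOutcome (S : C → P → ℚ) (π : P → C) : Prop :=
  ∃ r : P → ℕ, Function.Injective r ∧ MaxFirstOrder r S π

/-- Outcome of the min-first rule along the order `r`: at each step the filled
position is one whose best remaining candidate score is smallest among the remaining
positions, and it receives a best remaining candidate. -/
def MinFirstOrder (r : P → ℕ) (S : C → P → ℚ) (π : P → C) : Prop :=
  Function.Injective π ∧
    (∀ p : P, ∀ c : C, (∀ p' : P, r p' < r p → c ≠ π p') → S c p ≤ S (π p) p) ∧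
    (∀ p p'' : P, r p ≤ r p'' →
      ∃ c : C, (∀ p' : P, r p' < r p → c ≠ π p') ∧ S (π p) p ≤ S c p'')

/-- Outcome of the min-first sequential rule. -/
def MinFirstOutcome (S : C → P → ℚ) (π : P → C) : Prop :=
  ∃ r : P → ℕ, Function.Injective r ∧ MinFirstOrder r S π

/-- A line-up is reasonably satisfying if (i) there are no two positions `p, p'` with
`score_p(π_{p'}) > score_p(π_p)` and `score_p(π_{p'}) > score_{p'}(π_{p'})`, and
(ii) no unassigned candidate scores higher on some position than its occupant. -/
def ReasonablySatisfying (S : C → P → ℚ) (π : P → C) : Prop :=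
  (¬ ∃ p p' : P, S (π p') p > S (π p) p ∧ S (π p') p > S (π p') p') ∧
  (¬ ∃ (c : C) (p : P), c ∉ Set.range π ∧ S c p > S (π p) p)

/-- A line-up is score Pareto optimal if no line-up is at least as good on every
position and strictly better on some position. -/
def ScoreParetoOptimal (S : C → P → ℚ) (π : P → C) : Prop :=
  ¬ ∃ π' : P → C, Function.Injective π' ∧
      (∀ p : P, S (π p) p ≤ S (π' p) p) ∧ (∃ p : P, S (π p) p < S (π' p) p)

/-- The entries of `v` sorted in decreasing order; `sortedDesc v i` is the
`(i+1)`-st largest entry of `v`. -/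
def sortedDesc {n : ℕ} (v : Fin n → ℚ) : Fin n → ℚ :=
  v ∘ (Tuple.sort (fun i => -v i))

/-- Ordered weighted average of `v` with OWA-vector `Λ`. -/
def owa {n : ℕ} (Λ : Fin n → ℚ) (v : Fin n → ℚ) : ℚ :=
  ∑ i, Λ i * sortedDesc v i

/-- The score vector of a line-up. -/
def scoreVec {q : ℕ} (S : C → Fin q → ℚ) (π : Fin q → C) : Fin q → ℚ :=
  fun p => S (π p) p

/-- Winner under the OWA-rule `f^Λ`. -/
def IsOWAWinner {q : ℕ} (Λ : Fin q → ℚ) (S : C → Fin q → ℚ) (π : Fin q → C) : Prop :=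
  Function.Injective π ∧
    ∀ π' : Fin q → C, Function.Injective π' →
      owa Λ (scoreVec S π') ≤ owa Λ (scoreVec S π)

end Defs

lemma sortedDesc_antitone {n : ℕ} (v : Fin n → ℚ) : Antitone (sortedDesc v) := by
  intro i j hij
  have h := Tuple.monotone_sort (fun i => -v i) hij
  simp only [Function.comp_apply] at h
  simpa [sortedDesc] using neg_le_neg_iff.mp h

lemma sortedDesc_sum {n : ℕ} (v : Fin n → ℚ) : ∑ i, sortedDesc v i = ∑ i, v i := by
  simpa [sortedDesc] using Equiv.sum_comp (Tuple.sort (fun i => -v i)) v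

lemma sortedDesc_mono {n : ℕ} {v w : Fin n → ℚ} (h : ∀ i, v i ≤ w i) (i : Fin n) :
    sortedDesc v i ≤ sortedDesc w i := by
  classical
  set σ := Tuple.sort (fun i => -v i) with hσ
  set g := Tuple.sort (fun i => -w i) with hg
  set K : Finset (Fin n) := (Finset.Iic i).image (fun j => g⁻¹ (σ j)) with hK
  have hcard : (Finset.Iio i).card < K.card := by
    rw [hK, Finset.card_image_of_injective _ (fun a b hab => σ.injective (g⁻¹.injective hab))]
    simp [Fin.card_Iio, Fin.card_Iic]
  obtain ⟨k, hkK, hk⟩ := Finset.not_subset.mp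
    (fun hsub => absurd (Finset.card_le_card hsub) (not_le.mpr hcard))
  simp only [hK, Finset.mem_image, Finset.mem_Iic] at hkK
  obtain ⟨j, hji, hjk⟩ := hkK
  have hik : i ≤ k := by simpa [Finset.mem_Iio, not_lt] using hk
  have h1 : sortedDesc v i ≤ sortedDesc v j := sortedDesc_antitone v hji
  have h2 : sortedDesc v j ≤ w (g k) := by
    rw [← hjk]
    simpa [sortedDesc, hσ] using h (σ j)
  have h3 : (w (g k) : ℚ) = sortedDesc w k := rfl
  have h4 : sortedDesc w k ≤ sortedDesc w i := sortedDesc_antitone w hik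
  linarith

lemma owa_lt_owa {n : ℕ} {Λ v w : Fin n → ℚ} (hΛ : ∀ i, 0 < Λ i)
    (h : ∀ i, v i ≤ w i) (hs : ∃ i, v i < w i) : owa Λ v < owa Λ w := by
  obtain ⟨p, hp⟩ := hs
  have hsum : ∑ i, sortedDesc v i < ∑ i, sortedDesc w i := by
    rw [sortedDesc_sum, sortedDesc_sum]
    exact Finset.sum_lt_sum (fun i _ => h i) ⟨p, Finset.mem_univ p, hp⟩
  have hmono := sortedDesc_mono h
  have hex : ∃ i, sortedDesc v i < sortedDesc w i := by
    by_contra hc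
    push_neg at hc
    have : ∀ i, sortedDesc v i = sortedDesc w i := fun i => le_antisymm (hmono i) (hc i)
    simp only [this] at hsum
    exact lt_irrefl _ hsum
  obtain ⟨i, hi⟩ := hex
  refine Finset.sum_lt_sum (fun j _ => ?_) ⟨i, Finset.mem_univ i, ?_⟩
  · exact mul_le_mul_of_nonneg_left (hmono j) (hΛ j).le
  · exact mul_lt_mul_of_pos_left hi (hΛ i)

/-- For an OWA-vector with all entries strictly positive, every winning line-up
under `f^Λ` is score Pareto optimal. -/
theorem stmt2 {C : Type*} [Fintype C] {q : ℕ} (Λ : Fin q → ℚ) (hΛ : ∀ i, 0 < Λ i)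
    (S : C → Fin q → ℚ) (π : Fin q → C) (h : IsOWAWinner Λ S π) :
    ScoreParetoOptimal S π := by
  rintro ⟨π', hinj, hle, p, hlt⟩
  have := h.2 π' hinj
  have hgt : owa Λ (scoreVec S π) < owa Λ (scoreVec S π') :=
    owa_lt_owa hΛ (fun i => hle i) ⟨p, hlt⟩
  linarith
end

section
/- The harmonic rule with OWA-vector (1, 1/2, 1/3) violates weak monotonicity: there exists a 3-candidate 3-position election, a winning line-up π, and an increase of the score of an assigned candidate-position pair of π, after which π is no longer winning. -/
open Function

/-!
With antitone nonnegative weights, an ordered weighted average is monotone in the score vector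
(sort the smaller vector, bound it entrywise, and apply the rearrangement inequality to the
larger one). Under `scores`, candidate `b` is the only one scoring above 4 at `p₁` or above 1 at `p₂`,
so every line-up is dominated entrywise by `(19/4, 1, 2)` (if `b` sits at `p₁`) or by `(4, 3, 2)`,
the score vector of `(a, b, c)`; their harmonic scores are `73/12` and `37/6`. Raising `c`'s
score at `p₃` to 3 gives `(a, b, c)` the score `13/2`, while `(b, a, c)` now scores
`19/4 + 3/2 + 1/3 = 79/12`.
-/

section OWA

variable {n : ℕ}

theorem antitone_sortedDesc (v : Fin n → ℚ) : Antitone (sortedDesc v) := by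
  intro i j hij
  simpa [sortedDesc] using Tuple.monotone_sort (fun i => -v i) hij

theorem sortedDesc_eq_comp_of_antitone {v : Fin n → ℚ} (σ : Equiv.Perm (Fin n))
    (hσ : Antitone (v ∘ σ)) : sortedDesc v = v ∘ σ := by
  have hsort := (Tuple.comp_sort_eq_comp_iff_monotone (f := fun i => -v i) (σ := σ)).mpr
    fun i j hij => neg_le_neg (hσ hij)
  funext i
  simpa [sortedDesc] using (congrFun hsort i).symm

theorem owa_eq_sum_of_antitone_comp (Λ : Fin n → ℚ) {v : Fin n → ℚ} (σ : Equiv.Perm (Fin n))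
    (hσ : Antitone (v ∘ σ)) : owa Λ v = ∑ i, Λ i * v (σ i) := by
  simp [owa, sortedDesc_eq_comp_of_antitone σ hσ]

theorem sum_mul_comp_perm_le_owa {Λ : Fin n → ℚ} (hΛ : Antitone Λ) (v : Fin n → ℚ)
    (σ : Equiv.Perm (Fin n)) : ∑ i, Λ i * v (σ i) ≤ owa Λ v := by
  set τ := Tuple.sort (fun i => -v i)
  have hv : ∀ i, v (σ i) = sortedDesc v ((τ⁻¹ * σ) i) := by
    simp [sortedDesc, τ]
  simp only [hv]
  exact (hΛ.monovary (antitone_sortedDesc v)).sum_mul_comp_perm_le_sum_mul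

theorem owa_mono {Λ : Fin n → ℚ} (hΛ : Antitone Λ) (hΛ₀ : 0 ≤ Λ) {v w : Fin n → ℚ}
    (hvw : v ≤ w) : owa Λ v ≤ owa Λ w :=
  let σ := Tuple.sort (fun i => -v i)
  calc owa Λ v = ∑ i, Λ i * v (σ i) := rfl
    _ ≤ ∑ i, Λ i * w (σ i) :=
      Finset.sum_le_sum fun i _ => mul_le_mul_of_nonneg_left (hvw (σ i)) (hΛ₀ i)
    _ ≤ owa Λ w := sum_mul_comp_perm_le_owa hΛ w σ

end OWA

section Harmonic

local notation "H" => (![1, 1/2, 1/3] : Fin 3 → ℚ)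

theorem antitone_harmonic : Antitone H := by
  rw [Fin.antitone_iff_succ_le]
  intro i
  fin_cases i <;> simp <;> norm_num

theorem harmonic_nonneg : 0 ≤ H := by
  intro i
  fin_cases i <;> norm_num

theorem owa_harmonic_eq {v : Fin 3 → ℚ} (σ : Equiv.Perm (Fin 3)) (h₀₁ : v (σ 1) ≤ v (σ 0))
    (h₁₂ : v (σ 2) ≤ v (σ 1)) : owa H v = v (σ 0) + v (σ 1) / 2 + v (σ 2) / 3 := by
  have hσ : Antitone (v ∘ σ) := by
    rw [Fin.antitone_iff_succ_le]
    intro i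
    fin_cases i <;> assumption
  rw [owa_eq_sum_of_antitone_comp H σ hσ, Fin.sum_univ_three]
  simp only [Matrix.cons_val]
  ring

-- Candidates `a, b, c` are `0, 1, 2`, and row `c` is the score vector of `c`.
def scores : Fin 3 → Fin 3 → ℚ := ![![4, 1, 0], ![19/4, 3, 0], ![0, 0, 2]]

def scores' : Fin 3 → Fin 3 → ℚ := ![![4, 1, 0], ![19/4, 3, 0], ![0, 0, 3]]

theorem scores'_eq_of_ne {c p : Fin 3} (h : (c, p) ≠ (2, 2)) : scores' c p = scores c p := by
  fin_cases c <;> fin_cases p <;> simp_all [scores, scores']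

theorem scores_le (c p : Fin 3) : scores c p ≤ ![19/4, 3, 2] p := by
  fin_cases c <;> fin_cases p <;> simp [scores] <;> norm_num

theorem scores_le_of_ne_one {c : Fin 3} (hc : c ≠ 1) : scores c 0 ≤ 4 ∧ scores c 1 ≤ 1 := by
  fin_cases c <;> simp [scores] at hc ⊢

theorem owa_scores_id : owa H (scoreVec scores id) = 37/6 := by
  rw [owa_harmonic_eq (Equiv.refl _)] <;> simp [scoreVec, scores] <;> norm_num

theorem owa_scoreVec_scores_le {π : Fin 3 → Fin 3} (hπ : Injective π) :
    owa H (scoreVec scores π) ≤ 37/6 := by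
  by_cases h₀ : π 0 = 1
  · have h₁ : π 1 ≠ 1 := fun h₁ => absurd (hπ (h₀.trans h₁.symm)) (by decide)
    have hbound : scoreVec scores π ≤ ![19/4, 1, 2] := by
      intro p
      fin_cases p
      · exact scores_le _ 0
      · exact (scores_le_of_ne_one h₁).2
      · exact scores_le _ 2
    calc owa H (scoreVec scores π) ≤ owa H ![19/4, 1, 2] :=
          owa_mono antitone_harmonic harmonic_nonneg hbound
      _ = 73/12 := by
        rw [owa_harmonic_eq (Equiv.swap 1 2)] <;> simp [Equiv.swap_apply_def] <;> norm_num
      _ ≤ 37/6 := by norm_num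
  · have hbound : scoreVec scores π ≤ ![4, 3, 2] := by
      intro p
      fin_cases p
      · exact (scores_le_of_ne_one h₀).1
      · exact scores_le _ 1
      · exact scores_le _ 2
    calc owa H (scoreVec scores π) ≤ owa H ![4, 3, 2] :=
          owa_mono antitone_harmonic harmonic_nonneg hbound
      _ = 37/6 := by rw [owa_harmonic_eq (Equiv.refl _)] <;> simp <;> norm_num

theorem isOWAWinner_scores_id : IsOWAWinner H scores id :=
  ⟨injective_id, fun _ hπ => owa_scores_id ▸ owa_scoreVec_scores_le hπ⟩

theorem not_isOWAWinner_scores'_id : ¬ IsOWAWinner H scores' id := by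
  rintro ⟨-, hwin⟩
  have hswap : owa H (scoreVec scores' ![1, 0, 2]) = 79/12 := by
    rw [owa_harmonic_eq (Equiv.swap 1 2)] <;> simp [scoreVec, scores', Equiv.swap_apply_def] <;>
      norm_num
  have hid : owa H (scoreVec scores' id) = 13/2 := by
    rw [owa_harmonic_eq (Equiv.refl _)] <;> simp [scoreVec, scores'] <;> norm_num
  have hbeaten := hwin ![1, 0, 2] (by decide)
  rw [hswap, hid] at hbeaten
  norm_num at hbeaten

end Harmonic

/-- The harmonic rule with OWA-vector (1, 1/2, 1/3) violates weak monotonicity. -/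
theorem stmt7 : ∃ (S S' : Fin 3 → Fin 3 → ℚ) (π : Fin 3 → Fin 3) (p0 : Fin 3),
    IsOWAWinner (![1, 1/2, 1/3] : Fin 3 → ℚ) S π ∧ S (π p0) p0 < S' (π p0) p0 ∧
    (∀ (c : Fin 3) (p : Fin 3), (c, p) ≠ (π p0, p0) → S' c p = S c p) ∧
    ¬ IsOWAWinner (![1, 1/2, 1/3] : Fin 3 → ℚ) S' π :=
  ⟨scores, scores', id, 2, isOWAWinner_scores_id, by simp [scores, scores']; norm_num,
    fun _ _ h => scores'_eq_of_ne h, not_isOWAWinner_scores'_id⟩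
end
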